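/- Fix 0 < q < 1 and let C_1 = C_1(q) be a positive integer with q^{C_1}/(1-q) < 1/10. For x ≥ 0 and t ≥ 0 let 𝓛_x(t) = #{1 ≤ n ≤ t : M_n ≤ x} be the time the chain spends at or below x up to time t. Then there exist constants C_2 = C_2(q) > 0, A = A(q) > 0 and c = c(q) > 0 such that for every starting state r ≤ C_1 and every real s ≥ 0, P_r(𝓛_{C_1}(s/2) < s/C_2) ≤ A e^{-cs}. -/

import Mathlib

/-!
If `M_n > C₁`, the excess `M_n - C₁` was created by some `Z_k` with `k ≤ n` and has decreased by
one at every step since, so the number of times `n ≤ N` with `M_n > C₁` is at most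
`∑_{k ≤ N} (Z_k - C₁)⁺`. Spending less than `s / 8` of the first `N = ⌊s / 2⌋` steps at or below
`C₁` thus forces this sum of independent variables above `N / 2`. At `x = (1 + q) / (2q)`, the
midpoint of `1` and the radius of convergence `1 / q`, one has `E[x^{(Z - C₁)⁺}] = 1 + q^{C₁ - 1}`,
whose square is less than `x` when `q^{C₁} / (1 - q) < 1/10`, so a Chernoff bound makes this
exponentially unlikely in `s`.
-/

open MeasureTheory
open scoped ENNReal

noncomputable section

/-- The chain `M_0 = m0`, `M_n = max (M_{n-1}, Z_n) - 1`. -/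
def chainM (m0 : ℕ) (z : ℕ → ℕ) : ℕ → ℕ
  | 0 => m0
  | n + 1 => max (chainM m0 z n) (z (n + 1)) - 1

/-- `𝓛_x(t) = #{1 ≤ n ≤ t : M_n ≤ x}`, the time the trajectory `M` spends at or below
`x` up to (real) time `t`. -/
noncomputable def occLow (M : ℕ → ℕ) (x : ℕ) (t : ℝ) : ℕ :=
  ((Finset.Icc 1 ⌊t⌋₊).filter (fun n => M n ≤ x)).card

open Finset ProbabilityTheory

section Chain

variable {C r : ℕ} (z : ℕ → ℕ)

theorem exists_excursion_of_lt_chainM (hr : r ≤ C) {n : ℕ} (h : C < chainM r z n) :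
    ∃ k ∈ Icc 1 n, n + (chainM r z n - C) ≤ k + (z k - C) := by
  induction n with
  | zero => simp only [chainM] at h; omega
  | succ n ih =>
    have hstep : chainM r z (n + 1) = max (chainM r z n) (z (n + 1)) - 1 := rfl
    rcases le_total (chainM r z n) (z (n + 1)) with hz | hz
    · exact ⟨n + 1, by simp, by rw [hstep, max_eq_right hz]; omega⟩
    · rw [hstep, max_eq_left hz] at h ⊢
      obtain ⟨k, hk, hle⟩ := ih (by omega)
      exact ⟨k, by simp only [mem_Icc] at hk ⊢; omega, by omega⟩

theorem le_card_low_add_sum_excess (hr : r ≤ C) (N : ℕ) :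
    N ≤ #{n ∈ Icc 1 N | chainM r z n ≤ C} + ∑ k ∈ Icc 1 N, (z k - C) := by
  have hhigh : #{n ∈ Icc 1 N | ¬chainM r z n ≤ C} ≤ ∑ k ∈ Icc 1 N, (z k - C) := by
    have hcover : {n ∈ Icc 1 N | ¬chainM r z n ≤ C} ⊆
        (Icc 1 N).biUnion fun k => Ico k (k + (z k - C)) := by
      intro n hn
      simp only [mem_filter, mem_Icc, not_le] at hn
      obtain ⟨k, hk, hle⟩ := exists_excursion_of_lt_chainM z hr hn.2
      simp only [mem_Icc] at hk
      exact mem_biUnion.2 ⟨k, mem_Icc.2 ⟨hk.1, hk.2.trans hn.1.2⟩, mem_Ico.2 ⟨hk.2, by omega⟩⟩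
    calc _ ≤ _ := card_le_card hcover
      _ ≤ _ := card_biUnion_le
      _ = _ := sum_congr rfl fun k _ => by rw [Nat.card_Ico, add_tsub_cancel_left]
  have := card_filter_add_card_filter_not (s := Icc 1 N) (fun n => chainM r z n ≤ C)
  simp only [Nat.card_Icc, add_tsub_cancel_right] at this
  omega

end Chain

section Chernoff

variable {Ω : Type*} [MeasurableSpace Ω] {P : Measure Ω}

theorem measure_le_sum_le_prod_lintegral_pow_div {ι : Type*} {Y : ι → Ω → ℕ}
    (hY : ∀ i, Measurable (Y i)) (hindep : iIndepFun Y P) (s : Finset ι)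
    {x : ℝ≥0∞} (hx : 1 ≤ x) (hx_top : x ≠ ∞) (T : ℕ) :
    P {ω | T ≤ ∑ k ∈ s, Y k ω} ≤ (∏ k ∈ s, ∫⁻ ω, x ^ Y k ω ∂P) / x ^ T := by
  have hpow : Measurable fun n : ℕ => x ^ n := measurable_from_nat
  calc P {ω | T ≤ ∑ k ∈ s, Y k ω} ≤ P {ω | x ^ T ≤ ∏ k ∈ s, x ^ Y k ω} :=
        measure_mono fun ω (hω : T ≤ _) => by
          simpa only [Set.mem_ofPred_eq, prod_pow_eq_pow_sum] using pow_le_pow_right₀ hx hω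
    _ ≤ (∫⁻ ω, ∏ k ∈ s, x ^ Y k ω ∂P) / x ^ T :=
        meas_ge_le_lintegral_div
          (Finset.measurable_prod s fun k _ => hpow.comp (hY k)).aemeasurable
          (pow_ne_zero _ (one_pos.trans_le hx).ne') (ENNReal.pow_ne_top hx_top)
    _ = (∏ k ∈ s, ∫⁻ ω, x ^ Y k ω ∂P) / x ^ T := by
        rw [lintegral_prod_eq_prod_lintegral_of_indepFun (X := fun k ω => x ^ Y k ω) s
          (hindep.comp (fun _ n => x ^ n) fun _ => hpow) fun k => hpow.comp (hY k)]

end Chernoff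

section Geometric

variable {q x : ℝ}

theorem hasSum_geometric_mul_pow_tsub (hq0 : 0 ≤ q) (hx : 0 ≤ x)
    (hqx : q * x < 1) (C : ℕ) :
    HasSum (fun n : ℕ => (1 - q) * q ^ n * x ^ (n + 1 - C))
      (1 - q ^ C + (1 - q) * q ^ C * x / (1 - q * x)) := by
  have hhead : ∑ n ∈ range C, (1 - q) * q ^ n * x ^ (n + 1 - C) = 1 - q ^ C := by
    rw [← geom_sum_mul_neg, sum_mul]
    refine sum_congr rfl fun n hn => ?_
    rw [Nat.sub_eq_zero_of_le (mem_range.1 hn), pow_zero]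
    ring
  have htail : HasSum (fun n : ℕ => (1 - q) * q ^ (n + C) * x ^ (n + C + 1 - C))
      ((1 - q) * q ^ C * x / (1 - q * x)) := by
    have h := (hasSum_geometric_of_lt_one (by positivity) hqx).mul_left ((1 - q) * q ^ C * x)
    rw [← div_eq_mul_inv] at h
    refine h.congr_fun fun n => ?_
    rw [show n + C + 1 - C = n + 1 by omega]
    ring
  rw [← hasSum_nat_add_iff' C, hhead, add_sub_cancel_left]
  exact htail

variable {Ω : Type*} [MeasurableSpace Ω] {P : Measure Ω} {Z : Ω → ℕ}

theorem lintegral_comp_nat_eq_tsum (hZ : Measurable Z) (f : ℕ → ℝ≥0∞) :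
    ∫⁻ ω, f (Z ω) ∂P = ∑' n, f n * P {ω | Z ω = n} := by
  rw [← lintegral_map measurable_from_nat hZ, lintegral_countable']
  refine tsum_congr fun n => ?_
  rw [Measure.map_apply hZ (measurableSet_singleton n)]
  rfl

theorem lintegral_ofReal_pow_tsub_of_geometric (hq0 : 0 ≤ q) (hq1 : q ≤ 1)
    (hZ : Measurable Z) (hpos : ∀ ω, 1 ≤ Z ω)
    (hgeom : ∀ k, 1 ≤ k → P {ω | Z ω = k} = ENNReal.ofReal ((1 - q) * q ^ (k - 1)))
    (hx : 0 ≤ x) (hqx : q * x < 1) (C : ℕ) :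
    ∫⁻ ω, ENNReal.ofReal x ^ (Z ω - C) ∂P
      = ENNReal.ofReal (1 - q ^ C + (1 - q) * q ^ C * x / (1 - q * x)) := by
  have hzero : P {ω | Z ω = 0} = 0 := by
    simp [fun ω => Nat.one_le_iff_ne_zero.1 (hpos ω)]
  have hterm (n : ℕ) : ENNReal.ofReal x ^ (n + 1 - C) * P {ω | Z ω = n + 1}
      = ENNReal.ofReal ((1 - q) * q ^ n * x ^ (n + 1 - C)) := by
    rw [hgeom _ (Nat.le_add_left 1 n), Nat.add_sub_cancel, ← ENNReal.ofReal_pow hx, mul_comm,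
      ← ENNReal.ofReal_mul (by nlinarith [pow_nonneg hq0 n])]
  have hnonneg (n : ℕ) : 0 ≤ (1 - q) * q ^ n * x ^ (n + 1 - C) := by
    have := sub_nonneg.2 hq1; positivity
  rw [lintegral_comp_nat_eq_tsum hZ (fun n => ENNReal.ofReal x ^ (n - C)),
    tsum_eq_zero_add' ENNReal.summable, hzero, mul_zero, zero_add]
  simp_rw [hterm]
  rw [← ENNReal.ofReal_tsum_of_nonneg hnonneg
    (hasSum_geometric_mul_pow_tsub hq0 hx hqx C).summable,
    (hasSum_geometric_mul_pow_tsub hq0 hx hqx C).tsum_eq]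

theorem lintegral_midpoint_pow_tsub_of_geometric (hq0 : 0 < q) (hq1 : q < 1)
    (hZ : Measurable Z) (hpos : ∀ ω, 1 ≤ Z ω)
    (hgeom : ∀ k, 1 ≤ k → P {ω | Z ω = k} = ENNReal.ofReal ((1 - q) * q ^ (k - 1)))
    {C : ℕ} (hC : 1 ≤ C) :
    ∫⁻ ω, ENNReal.ofReal ((1 + q) / (2 * q)) ^ (Z ω - C) ∂P = ENNReal.ofReal (1 + q ^ (C - 1)) := by
  have hqx : q * ((1 + q) / (2 * q)) = (1 + q) / 2 := by field_simp
  rw [lintegral_ofReal_pow_tsub_of_geometric hq0.le hq1.le hZ hpos hgeom (by positivity)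
    (by linarith) C, hqx, ← Nat.sub_add_cancel hC, pow_succ, Nat.add_sub_cancel]
  congr 1
  have h1q : 1 - q ≠ 0 := by linarith
  rw [show (1 : ℝ) - (1 + q) / 2 = (1 - q) / 2 by ring]
  field_simp
  ring

theorem measure_sum_tsub_ge_le_of_geometric {ι : Type*} {Z : ι → Ω → ℕ} (hq0 : 0 < q)
    (hq1 : q < 1) (hZ : ∀ i, Measurable (Z i)) (hindep : iIndepFun Z P)
    (hpos : ∀ i ω, 1 ≤ Z i ω)
    (hgeom : ∀ i k, 1 ≤ k → P {ω | Z i ω = k} = ENNReal.ofReal ((1 - q) * q ^ (k - 1)))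
    {C : ℕ} (hC : 1 ≤ C) (s : Finset ι) (T : ℕ) :
    P {ω | T ≤ ∑ k ∈ s, (Z k ω - C)}
      ≤ ENNReal.ofReal ((1 + q ^ (C - 1)) ^ #s / ((1 + q) / (2 * q)) ^ T) := by
  set x := (1 + q) / (2 * q)
  have hx : 1 ≤ x := by rw [le_div_iff₀ (by positivity)]; linarith
  calc _ ≤ (∏ k ∈ s, ∫⁻ ω, ENNReal.ofReal x ^ (Z k ω - C) ∂P) / ENNReal.ofReal x ^ T :=
        measure_le_sum_le_prod_lintegral_pow_div (fun k => measurable_from_nat.comp (hZ k))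
          (hindep.comp (fun _ n => n - C) fun _ => measurable_from_nat) s
          (ENNReal.one_le_ofReal.2 hx) ENNReal.ofReal_ne_top T
    _ = _ := by
        rw [prod_congr rfl fun k _ =>
            lintegral_midpoint_pow_tsub_of_geometric hq0 hq1 (hZ k) (hpos k) (hgeom k) hC,
          prod_const, ← ENNReal.ofReal_pow (by positivity), ← ENNReal.ofReal_pow (by positivity),
          ENNReal.ofReal_div_of_pos (by positivity)]

end Geometric

section Constants

variable {q : ℝ}

theorem sq_one_add_pow_lt (hq0 : 0 < q) (hq1 : q < 1) {C : ℕ} (hC : 1 ≤ C)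
    (hqC : q ^ C / (1 - q) < 1 / 10) :
    (1 + q ^ (C - 1)) ^ 2 < (1 + q) / (2 * q) := by
  have hb0 : 0 ≤ q ^ (C - 1) := pow_nonneg hq0.le _
  have hb1 : q ^ (C - 1) ≤ 1 := pow_le_one₀ hq0.le hq1.le
  have hqb : q * q ^ (C - 1) < (1 - q) / 10 := by
    rw [← pow_succ', Nat.sub_add_cancel hC]
    rw [div_lt_iff₀ (by linarith)] at hqC
    linarith
  rw [lt_div_iff₀ (by positivity)]
  nlinarith [mul_nonneg hq0.le (mul_nonneg hb0 (sub_nonneg.2 hb1))]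

theorem pow_div_pow_le_rpow {m x t : ℝ} (hm : 1 ≤ m) (hx : 0 < x) (hmx : m ^ 2 < x)
    {N T : ℕ} (hNT : N ≤ 2 * T) (htT : t ≤ T) :
    m ^ N / x ^ T ≤ (m ^ 2 / x) ^ t := by
  calc m ^ N / x ^ T ≤ (m ^ 2) ^ T / x ^ T := by
        rw [← pow_mul]
        gcongr
    _ = (m ^ 2 / x) ^ (T : ℝ) := by rw [Real.rpow_natCast, div_pow]
    _ ≤ (m ^ 2 / x) ^ t :=
        Real.rpow_le_rpow_of_exponent_ge (by positivity) ((div_le_one hx).2 hmx.le) htT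

end Constants

theorem sum_excess_ge_of_occLow_lt {C r : ℕ} {z : ℕ → ℕ} (hr : r ≤ C) {s : ℝ} (hs : 4 ≤ s)
    (h : (occLow (chainM r z) C (s / 2) : ℝ) < s / 8) :
    ⌊s / 2⌋₊ / 2 + 1 ≤ ∑ k ∈ Icc 1 ⌊s / 2⌋₊, (z k - C) := by
  set N := ⌊s / 2⌋₊
  have hN : s / 2 - 1 < N := by linarith [Nat.lt_floor_add_one (s / 2)]
  have hcount : (N : ℝ) ≤ occLow (chainM r z) C (s / 2) + ∑ k ∈ Icc 1 N, (z k - C) := by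
    exact_mod_cast le_card_low_add_sum_excess z hr N
  have : (N : ℝ) < 2 * ∑ k ∈ Icc 1 N, (z k - C) := by linarith
  have : N < 2 * ∑ k ∈ Icc 1 N, (z k - C) := by exact_mod_cast this
  omega

/-- **The chain spends a positive fraction of time at low levels.** Fix `0 < q < 1` and
a positive integer `C₁` with `q^{C₁}/(1-q) < 1/10`. There are constants `C₂ > 0`,
`A > 0` and `c > 0` such that for every starting state `r ≤ C₁` and every real `s ≥ 0`,
`P_r(𝓛_{C₁}(s/2) < s/C₂) ≤ A e^{-c s}`. -/
theorem occupation_time_lower_tail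
    {Ω : Type*} [MeasurableSpace Ω] (P : Measure Ω) [IsProbabilityMeasure P]
    (q : ℝ) (hq0 : 0 < q) (hq1 : q < 1)
    (Z : ℕ → Ω → ℕ)
    (hmeas : ∀ i, Measurable (Z i))
    (hindep : ProbabilityTheory.iIndepFun Z P)
    (hpos : ∀ i ω, 1 ≤ Z i ω)
    (hgeom : ∀ i k, 1 ≤ k →
      P {ω | Z i ω = k} = ENNReal.ofReal ((1 - q) * q ^ (k - 1)))
    (C₁ : ℕ) (hC₁pos : 1 ≤ C₁) (hC₁ : q ^ C₁ / (1 - q) < 1 / 10) :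
    ∃ C₂ > (0 : ℝ), ∃ A > (0 : ℝ), ∃ c > (0 : ℝ),
      ∀ r : ℕ, r ≤ C₁ → ∀ s : ℝ, 0 ≤ s →
        P {ω | ((occLow (chainM r (fun n => Z n ω)) C₁ (s / 2) : ℝ)) < s / C₂}
          ≤ ENNReal.ofReal (A * Real.exp (-c * s)) := by
  set x := (1 + q) / (2 * q)
  set m := 1 + q ^ (C₁ - 1)
  have hx : 0 < x := by positivity
  have hm : 1 ≤ m := le_add_of_nonneg_right (pow_nonneg hq0.le _)
  have hmx : m ^ 2 < x := sq_one_add_pow_lt hq0 hq1 hC₁pos hC₁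
  set c := -Real.log (m ^ 2 / x) / 4
  have hc : 0 < c :=
    div_pos (neg_pos.2 (Real.log_neg (by positivity) ((div_lt_one hx).2 hmx))) four_pos
  refine ⟨8, by norm_num, Real.exp (4 * c), Real.exp_pos _, c, hc, fun r hr s _ => ?_⟩
  rcases lt_or_ge s 4 with hs4 | hs4
  · refine prob_le_one.trans (ENNReal.one_le_ofReal.2 ?_)
    rw [← Real.exp_add]
    exact Real.one_le_exp (by nlinarith)
  set N := ⌊s / 2⌋₊
  have hsN : s / 4 ≤ (N / 2 + 1 : ℕ) := by
    have hfloor : s / 2 < N + 1 := Nat.lt_floor_add_one (s / 2)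
    have hhalf : (N : ℝ) ≤ 2 * (N / 2 : ℕ) + 1 := by exact_mod_cast (by omega : N ≤ 2 * (N / 2) + 1)
    push_cast
    linarith
  calc _ ≤ P {ω | N / 2 + 1 ≤ ∑ k ∈ Icc 1 N, (Z k ω - C₁)} :=
        measure_mono fun ω => sum_excess_ge_of_occLow_lt hr hs4
    _ ≤ ENNReal.ofReal (m ^ N / x ^ (N / 2 + 1)) := by
        have := measure_sum_tsub_ge_le_of_geometric hq0 hq1 hmeas hindep hpos hgeom hC₁pos
          (Icc 1 N) (N / 2 + 1)
        rwa [Nat.card_Icc, add_tsub_cancel_right] at this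
    _ ≤ ENNReal.ofReal ((m ^ 2 / x) ^ (s / 4)) :=
        ENNReal.ofReal_le_ofReal (pow_div_pow_le_rpow hm hx hmx (by omega) hsN)
    _ ≤ ENNReal.ofReal (Real.exp (4 * c) * Real.exp (-c * s)) := by
        rw [Real.rpow_def_of_pos (by positivity), show Real.log (m ^ 2 / x) * (s / 4) = -c * s
          by ring]
        exact ENNReal.ofReal_le_ofReal
          (le_mul_of_one_le_left (Real.exp_pos _).le (Real.one_le_exp (by linarith)))

end
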